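/- arXiv:2508.13856 — 2 statements merged into one kernel-verified Lean document; each statement's English description precedes it below -/
import Mathlib

section
/- Let ε, M, δ be real numbers with M ≥ 0 and ε = 2M + 2δ. Let C₁, Cₙ be real numbers with C₁ - Cₙ = ε. Suppose C₁'', Cₙ'', C₁', Cₙ', x, y, x', y' are real numbers satisfying: x, y, x', y' ∈ [0, M], C₁' = C₁'' + x, Cₙ' = Cₙ'' + y, ε/2 - M ≤ C₁'' - Cₙ'' ≤ ε/2, and ε/2 < C₁' - Cₙ' ≤ ε/2 + M. Define C₁ⁿᵉʷ = C₁'' + x' + Cₙ - Cₙ' and Cₙⁿᵉʷ = Cₙ'' + y' + C₁ - C₁'. Then Cₙ + δ ≤ C₁ⁿᵉʷ ≤ C₁ - δ and Cₙ + δ ≤ Cₙⁿᵉʷ ≤ C₁ - δ. -/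
/-- Relaxation lemma for DC-Balance: if the initial envy is `ε = 2M + 2δ`, then
after a swap the two new costs lie in `[Cₙ + δ, C₁ - δ]`. -/
theorem dcbalance_relaxation (ε M δ C1 Cn C1'' Cn'' C1' Cn' x y x' y' : ℝ)
    (hM : 0 ≤ M) (hεδ : ε = 2 * M + 2 * δ) (hε : C1 - Cn = ε)
    (hx0 : 0 ≤ x) (hxM : x ≤ M) (hy0 : 0 ≤ y) (hyM : y ≤ M)
    (hx'0 : 0 ≤ x') (hx'M : x' ≤ M) (hy'0 : 0 ≤ y') (hy'M : y' ≤ M)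
    (hC1' : C1' = C1'' + x) (hCn' : Cn' = Cn'' + y)
    (h1 : ε / 2 - M ≤ C1'' - Cn'') (h2 : C1'' - Cn'' ≤ ε / 2)
    (h3 : ε / 2 < C1' - Cn') (h4 : C1' - Cn' ≤ ε / 2 + M) :
    (Cn + δ ≤ C1'' + x' + Cn - Cn' ∧ C1'' + x' + Cn - Cn' ≤ C1 - δ) ∧
    (Cn + δ ≤ Cn'' + y' + C1 - C1' ∧ Cn'' + y' + C1 - C1' ≤ C1 - δ) := by
  refine ⟨⟨by linarith, by linarith⟩, ⟨by linarith, by linarith⟩⟩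
end

section
/- Let S be a multiset of nonnegative integers with sum n·T for a positive integer n ≥ 2. Then S can be partitioned into n subsets each summing to T if and only if, in the balanced multi-stage graph with n agents and |S| + 1 stages constructed by labeling exactly one node in each stage ≥ 2 with a distinct element of S, setting all edges into a labeled node ℓ to weight ℓ and all other edges to weight 0, there exists a valid assignment of n node-disjoint paths in which all path costs are equal (envy 0). -/
/-- Multiway number partitioning reduction: a multiset `s : Fin m → ℕ` with sum
`n·T` partitions into `n` subsets each of sum `T` iff the balanced multi-stage
graph with `n` agents and `m+1` stages — where in each stage `j ≥ 2` exactly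
the node `0` is labeled with `s j` and every edge into it has weight `s j`,
all other edges weight `0` — admits a valid assignment (one bijection
`π j : agents ≃ nodes` per stage) in which all path costs are equal (envy 0). -/
theorem multiway_partition_reduction (m n T : ℕ) (hn : 2 ≤ n)
    (s : Fin m → ℕ) (hsum : ∑ j, s j = n * T) :
    (∃ φ : Fin m → Fin n, ∀ k : Fin n,
        ∑ j ∈ Finset.univ.filter (fun j => φ j = k), s j = T) ↔
    (∃ π : Fin (m + 1) → Equiv.Perm (Fin n), ∀ i i' : Fin n,
        (∑ j : Fin m, if π j.succ i = ⟨0, by omega⟩ then s j else 0) =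
        (∑ j : Fin m, if π j.succ i' = ⟨0, by omega⟩ then s j else 0)) := by
  have hz : (0 : ℕ) < n := by omega
  set z : Fin n := ⟨0, by omega⟩ with hzdef
  constructor
  · rintro ⟨φ, hφ⟩
    refine ⟨fun k => Fin.cases 1 (fun j => Equiv.swap z (φ j)) k, fun i i' => ?_⟩
    have key : ∀ i : Fin n,
        (∑ j : Fin m, if (Fin.cases 1 (fun j => Equiv.swap z (φ j)) (Fin.succ j) : Equiv.Perm (Fin n)) i = z then s j else 0) = T := by
      intro i
      rw [← hφ i, Finset.sum_filter]
      refine Finset.sum_congr rfl fun j _ => ?_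
      simp only [Fin.cases_succ]
      congr 1
      have : Equiv.swap z (φ j) i = z ↔ i = φ j := by
        constructor
        · intro h
          have := (Equiv.swap z (φ j)).injective (h.trans (Equiv.swap_apply_right z (φ j)).symm)
          exact this
        · rintro rfl; exact Equiv.swap_apply_right z (φ j)
      simp [this, eq_comm]
    rw [key i, key i']
  · rintro ⟨π, hπ⟩
    have hcost : ∀ i, (∑ j : Fin m, if π j.succ i = z then s j else 0) = T := by
      have htot : ∑ i : Fin n, (∑ j : Fin m, if π j.succ i = z then s j else 0) = n * T := by
        rw [Finset.sum_comm, ← hsum]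
        refine Finset.sum_congr rfl fun j _ => ?_
        have he : ∀ x : Fin n, ((π j.succ) x = z) ↔ (x = (π j.succ).symm z) :=
          fun x => (Equiv.eq_symm_apply _).symm
        simp only [he, Finset.sum_ite_eq', Finset.mem_univ, if_true]
      intro i
      have hall : ∀ i', (∑ j : Fin m, if π j.succ i' = z then s j else 0)
          = (∑ j : Fin m, if π j.succ i = z then s j else 0) := fun i' => hπ i' i
      rw [Finset.sum_congr rfl (fun i' _ => hall i'), Finset.sum_const,
        Finset.card_univ, Fintype.card_fin, smul_eq_mul] at htot
      exact Nat.eq_of_mul_eq_mul_left hz htot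
    refine ⟨fun j => (π j.succ).symm z, fun k => ?_⟩
    rw [← hcost k, Finset.sum_filter]
    refine Finset.sum_congr rfl fun j _ => ?_
    congr 1
    exact propext ⟨fun h => h ▸ (Equiv.apply_symm_apply _ _),
      fun h => by simp only [← h, Equiv.symm_apply_apply]⟩
end
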